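/- arXiv:math/0606610 — 3 statements merged into one kernel-verified Lean document; each statement's English description precedes it below -/
import Mathlib

section
/- For the arithmetic progression a, a+d, …, a+sd with gcd(a,d) = 1, a ≥ 2, d ≥ 1 and 1 ≤ s < a, writing q = ⌈(a−1)/s⌉, the second Sylvester sum satisfies 12·S₂ = −s((a+sd)(2a+sd) + a²)·q⁴ + (4a³ + 2(3s−2)a² + 2sd(3s−2)a + 2s²d²(s−1))·q³ + (6(d−1)a³ + 3(2 − s − 2d)a² − 3sd(s−2)a − sd²(s² − 3s + 1))·q² + (2(2d−1)(d−1)a³ − (6d² − 6d + 2)a² + 2d(d−s)a + s(1−s)d²)·q + ad(a−1)(d−1)(ad − a − d). -/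
/-!
The sums `∑ (a + i d) xᵢ` are exactly the numbers `aX + dY` with `Y ≤ sX`. Since `gcd(a, d) = 1`,
every residue class mod `a` is `dY + aℤ` for a unique `0 ≤ Y < a`, and the least such number in
that class is `a⌈Y/s⌉ + dY`. Hence the gaps in the class are the numbers `dY + ak` with
`-⌊dY/a⌋ ≤ k < ⌈Y/s⌉`.

The gaps with `k < 0` are `dY - aj` for the lattice points `1 ≤ Y < a`, `1 ≤ j < d` with
`aj < dY`. The reflection `(Y, j) ↦ (a - Y, d - j)` negates `dY - aj`, so their squares sum to half
of `∑ (dY - aj)²` over the whole rectangle, which is `ad(a-1)(d-1)(ad-a-d)/6`. The squares of the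
gaps with `k ≥ 0` sum to a polynomial in `N = a - 1` and `⌈N/s⌉`, by induction on `N`.
-/

open Finset

def progressionSemigroup (a d s : ℕ) : Set ℕ :=
  {n | ∃ x : Fin (s + 1) → ℕ, n = ∑ i : Fin (s + 1), (a + (i : ℕ) * d) * x i}

lemma mem_progressionSemigroup_iff {a d s n : ℕ} :
    n ∈ progressionSemigroup a d s ↔ ∃ X Y, Y ≤ s * X ∧ n = a * X + d * Y := by
  constructor
  · rintro ⟨x, rfl⟩
    refine ⟨∑ i, x i, ∑ i : Fin (s + 1), (i : ℕ) * x i, ?_, ?_⟩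
    · rw [mul_sum]
      exact sum_le_sum fun i _ => Nat.mul_le_mul_right _ (Nat.lt_succ_iff.mp i.isLt)
    · rw [mul_sum, mul_sum, ← sum_add_distrib]
      exact sum_congr rfl fun i _ => by ring
  · rintro ⟨X, Y, hY, rfl⟩
    induction X generalizing Y with
    | zero => exact ⟨0, by simp_all⟩
    | succ X ih =>
      obtain ⟨x, hx⟩ := ih (Y - min Y s) (by rw [Nat.mul_succ] at hY; omega)
      refine ⟨x + Pi.single ⟨min Y s, by omega⟩ 1, ?_⟩
      simp only [Pi.add_apply, mul_add, sum_add_distrib, ← hx, Pi.single_apply, mul_ite, mul_one,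
        mul_zero, sum_ite_eq', mem_univ, if_true]
      have : d * Y = d * (Y - min Y s) + min Y s * d := by
        rw [mul_comm (min Y s), ← mul_add]
        congr 1
        omega
      rw [this]
      ring

lemma zero_mem_progressionSemigroup (a d s : ℕ) : 0 ∈ progressionSemigroup a d s :=
  mem_progressionSemigroup_iff.2 ⟨0, 0, le_rfl, rfl⟩

lemma mem_progressionSemigroup_iff_le {a d s n Y : ℕ} (hs : 0 < s) (had : Nat.Coprime a d)
    (hY : Y < a) (hn : d * Y ≡ n [MOD a]) :
    n ∈ progressionSemigroup a d s ↔ a * (Y ⌈/⌉ s) + d * Y ≤ n := by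
  rw [mem_progressionSemigroup_iff]
  constructor
  · rintro ⟨X, Y', hY', rfl⟩
    have hmod : Y' ≡ Y [MOD a] := by
      refine Nat.ModEq.cancel_left_of_coprime had (Nat.ModEq.trans ?_ hn.symm)
      simp [Nat.ModEq]
    have hYY' : Y ≤ Y' := calc
      Y = Y % a := (Nat.mod_eq_of_lt hY).symm
      _ = Y' % a := hmod.symm
      _ ≤ Y' := Nat.mod_le _ _
    have hX : Y ⌈/⌉ s ≤ X := (ceilDiv_le_iff_le_mul hs).2 (hYY'.trans hY')
    gcongr
  · intro h
    obtain ⟨m, rfl⟩ := Nat.exists_eq_add_of_le h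
    have : a ∣ m := by
      have := (Nat.modEq_iff_dvd' (by omega)).1 hn
      rwa [show a * (Y ⌈/⌉ s) + d * Y + m - d * Y = a * (Y ⌈/⌉ s) + m by omega,
        Nat.dvd_add_right (dvd_mul_right _ _)] at this
    obtain ⟨k, rfl⟩ := this
    refine ⟨Y ⌈/⌉ s + k, Y, ?_, by ring⟩
    calc Y ≤ s * (Y ⌈/⌉ s) := (ceilDiv_le_iff_le_mul hs).1 le_rfl
      _ ≤ s * (Y ⌈/⌉ s + k) := Nat.mul_le_mul_left _ (Nat.le_add_right _ _)

lemma sum_not_mem_progressionSemigroup {M : Type*} [AddCommMonoid M] {a d s : ℕ} (ha : 0 < a)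
    (hs : 0 < s) (had : Nat.Coprime a d) {NR : Finset ℕ}
    (hNR : ∀ n, n ∈ NR ↔ n ∉ progressionSemigroup a d s) (f : ℕ → M) :
    ∑ n ∈ NR, f n = ∑ Y ∈ range a, ∑ t ∈ range (Y ⌈/⌉ s + d * Y / a), f (d * Y % a + a * t) := by
  rw [sum_sigma']
  symm
  refine sum_bij (fun p _ => d * p.1 % a + a * p.2) ?_ ?_ ?_ (fun _ _ => rfl)
  · rintro ⟨Y, t⟩ hp
    simp only [mem_sigma, mem_range] at hp
    have hmod : d * Y ≡ d * Y % a + a * t [MOD a] := by simp [Nat.ModEq]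
    rw [hNR, mem_progressionSemigroup_iff_le hs had hp.1 hmod]
    have := Nat.div_add_mod (d * Y) a
    have := Nat.mul_lt_mul_of_pos_left hp.2 ha
    rw [mul_add] at this
    omega
  · rintro ⟨Y, t⟩ hp ⟨Y', t'⟩ hp' h
    simp only [mem_sigma, mem_range] at hp hp' h
    have hr : d * Y % a = d * Y' % a := by simpa [Nat.mod_mod] using congrArg (· % a) h
    have hY : Y = Y' := by
      have := Nat.ModEq.cancel_left_of_coprime had hr
      rwa [Nat.ModEq, Nat.mod_eq_of_lt hp.1, Nat.mod_eq_of_lt hp'.1] at this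
    subst hY
    rw [Nat.eq_of_mul_eq_mul_left ha (by omega : a * t = a * t')]
  · intro n hn
    obtain ⟨Y, hY, hYn⟩ := Nat.exists_mul_mod_eq_of_coprime n had.symm ha.ne'
    have hlt : n < a * (Y ⌈/⌉ s) + d * Y := by
      simpa [mem_progressionSemigroup_iff_le hs had hY hYn] using (hNR n).1 hn
    refine ⟨⟨Y, n / a⟩, ?_, by rw [hYn]; exact Nat.mod_add_div n a⟩
    simp only [mem_sigma, mem_range]
    refine ⟨hY, Nat.lt_of_mul_lt_mul_left (a := a) ?_⟩
    have := Nat.div_add_mod (d * Y) a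
    have := Nat.div_add_mod n a
    rw [mul_add]
    omega

lemma sum_sq_not_mem_progressionSemigroup {a d s : ℕ} (ha : 0 < a) (hs : 0 < s)
    (had : Nat.Coprime a d) {NR : Finset ℕ}
    (hNR : ∀ n, n ∈ NR ↔ n ∉ progressionSemigroup a d s) :
    ∑ n ∈ NR, (n : ℚ) ^ 2 =
      ∑ Y ∈ range a, ∑ t ∈ range (d * Y / a), ((d * Y % a : ℕ) + (a : ℚ) * t) ^ 2
        + ∑ Y ∈ range a, ∑ k ∈ range (Y ⌈/⌉ s), ((d : ℚ) * Y + a * k) ^ 2 := by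
  rw [sum_not_mem_progressionSemigroup ha hs had hNR (fun n => (n : ℚ) ^ 2), ← sum_add_distrib]
  refine sum_congr rfl fun Y _ => ?_
  rw [add_comm (Y ⌈/⌉ s), sum_range_add]
  congr 1 <;> refine sum_congr rfl fun k _ => ?_
  · push_cast
    ring
  · rw [show d * Y % a + a * (d * Y / a + k) = d * Y + a * k by
      rw [mul_add, ← add_assoc, Nat.mod_add_div]]
    push_cast
    ring

lemma sum_range_quadratic {K : Type*} [Field K] [CharZero K] (α β γ : K) (m : ℕ) :
    ∑ t ∈ range m, (α + β * t + γ * (t : K) ^ 2) =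
      m * α + β * (m * (m - 1) / 2) + γ * (m * (m - 1) * (2 * m - 1) / 6) := by
  induction m with
  | zero => simp
  | succ m ih => rw [sum_range_succ, ih]; push_cast; ring

lemma sum_range_sq_add_mul {K : Type*} [Field K] [CharZero K] (x α : K) (m : ℕ) :
    ∑ t ∈ range m, (x + α * t) ^ 2 =
      m * x ^ 2 + α * x * (m * (m - 1)) + α ^ 2 * (m * (m - 1) * (2 * m - 1) / 6) := by
  calc ∑ t ∈ range m, (x + α * t) ^ 2
      = ∑ t ∈ range m, (x ^ 2 + 2 * x * α * t + α ^ 2 * (t : K) ^ 2) :=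
        sum_congr rfl fun t _ => by ring
    _ = _ := by rw [sum_range_quadratic]; ring

lemma sum_Ico_one_eq_sum_range {M : Type*} [AddCommMonoid M] {f : ℕ → M} (hf : f 0 = 0)
    (m : ℕ) : ∑ t ∈ Ico 1 m, f t = ∑ t ∈ range m, f t := by
  rw [range_eq_Ico]
  exact sum_subset (Ico_subset_Ico_left zero_le_one) fun t ht ht' => by
    obtain rfl : t = 0 := by simp only [mem_Ico] at ht ht'; omega
    exact hf

lemma sum_Ico_one_reflect {M : Type*} [AddCommMonoid M] (f : ℕ → M) (n : ℕ) :
    ∑ j ∈ Ico 1 n, f (n - j) = ∑ j ∈ Ico 1 n, f j := by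
  simpa using sum_Ico_reflect f 1 (Nat.le_succ n)

lemma max_sq_add_max_neg_sq {R : Type*} [Ring R] [LinearOrder R] [IsOrderedRing R] (x : R) :
    max x 0 ^ 2 + max (-x) 0 ^ 2 = x ^ 2 := by
  rcases le_total x 0 with h | h <;> simp [h]

lemma two_mul_sum_rectangle_max_sq (a d : ℕ) :
    2 * ∑ Y ∈ Ico 1 a, ∑ j ∈ Ico 1 d, max ((d : ℚ) * Y - a * j) 0 ^ 2 =
      ∑ Y ∈ Ico 1 a, ∑ j ∈ Ico 1 d, ((d : ℚ) * Y - a * j) ^ 2 := by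
  have reflect : ∑ Y ∈ Ico 1 a, ∑ j ∈ Ico 1 d, max ((d : ℚ) * Y - a * j) 0 ^ 2 =
      ∑ Y ∈ Ico 1 a, ∑ j ∈ Ico 1 d, max (-((d : ℚ) * Y - a * j)) 0 ^ 2 := by
    refine (sum_Ico_one_reflect _ a).symm.trans (sum_congr rfl fun Y hY => ?_)
    refine (sum_Ico_one_reflect _ d).symm.trans (sum_congr rfl fun j hj => ?_)
    rw [Nat.cast_sub (mem_Ico.1 hY).2.le, Nat.cast_sub (mem_Ico.1 hj).2.le]
    ring_nf
  rw [two_mul]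
  nth_rewrite 2 [reflect]
  simp only [← sum_add_distrib, max_sq_add_max_neg_sq]

lemma sum_rectangle_sq {a d : ℕ} (ha : 1 ≤ a) (hd : 1 ≤ d) :
    ∑ Y ∈ Ico 1 a, ∑ j ∈ Ico 1 d, ((d : ℚ) * Y - a * j) ^ 2 =
      a * d * (a - 1) * (d - 1) * (a * d - a - d) / 6 := by
  have sum_id (m : ℕ) : ∑ t ∈ Ico 1 m, (t : ℚ) = m * (m - 1) / 2 := by
    rw [sum_Ico_one_eq_sum_range (by simp)]
    simpa using sum_range_quadratic (0 : ℚ) 1 0 m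
  have sum_sq (m : ℕ) : ∑ t ∈ Ico 1 m, (t : ℚ) ^ 2 = m * (m - 1) * (2 * m - 1) / 6 := by
    rw [sum_Ico_one_eq_sum_range (by simp)]
    simpa using sum_range_quadratic (0 : ℚ) 0 1 m
  simp only [sub_sq, sum_add_distrib, sum_sub_distrib, mul_pow, ← mul_sum, ← sum_mul, sum_const,
    Nat.card_Ico, nsmul_eq_mul, sum_id, sum_sq, Nat.cast_sub ha, Nat.cast_sub hd]
  ring

lemma sum_range_div_sq_eq_sum_max_sq {a d Y : ℕ} (hd : 0 < d) (hY : Y < a) :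
    ∑ t ∈ range (d * Y / a), ((d * Y % a : ℕ) + (a : ℚ) * t) ^ 2 =
      ∑ j ∈ Ico 1 d, max ((d : ℚ) * Y - a * j) 0 ^ 2 := by
  set e := d * Y / a
  set r := d * Y % a
  have hdY : (d : ℚ) * Y = a * e + r := by exact_mod_cast (Nat.div_add_mod (d * Y) a).symm
  have hr : (r : ℚ) < a := by exact_mod_cast Nat.mod_lt _ (by omega)
  have he : e < d :=
    Nat.div_lt_of_lt_mul (by rw [mul_comm a]; exact Nat.mul_lt_mul_of_pos_left hY hd)
  have tail : ∑ j ∈ Ico (e + 1) d, max ((d : ℚ) * Y - a * j) 0 ^ 2 = 0 :=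
    sum_eq_zero fun j hj => by
      have : (e : ℚ) + 1 ≤ j := by exact_mod_cast (mem_Ico.1 hj).1
      rw [max_eq_right (by nlinarith)]
      simp
  rw [← sum_Ico_consecutive _ (Nat.le_add_left 1 e) he, tail, add_zero, sum_Ico_eq_sum_range,
    Nat.add_sub_cancel, ← sum_range_reflect]
  refine sum_congr rfl fun t ht => ?_
  have ht : t < e := mem_range.1 ht
  have ht' : (t : ℚ) + 1 ≤ e := by exact_mod_cast ht
  rw [max_eq_left (by push_cast; nlinarith), Nat.cast_sub (by omega), Nat.cast_sub (by omega)]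
  push_cast
  rw [hdY]
  ring

lemma twelve_mul_sum_sq_gaps_below {a d : ℕ} (ha : 0 < a) (hd : 0 < d) :
    12 * ∑ Y ∈ range a, ∑ t ∈ range (d * Y / a), ((d * Y % a : ℕ) + (a : ℚ) * t) ^ 2 =
      a * d * (a - 1) * (d - 1) * (a * d - a - d) := by
  rw [sum_congr rfl fun Y hY => sum_range_div_sq_eq_sum_max_sq hd (mem_range.1 hY),
    ← sum_Ico_one_eq_sum_range (sum_eq_zero fun j _ => by simp [mul_nonneg]),
    show (12 : ℚ) = 6 * 2 by norm_num, mul_assoc, two_mul_sum_rectangle_max_sq,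
    sum_rectangle_sq ha hd]
  ring

lemma Nat.add_one_ceilDiv {s : ℕ} (hs : 0 < s) (N : ℕ) :
    (N + 1) ⌈/⌉ s = N ⌈/⌉ s ∨ N = s * (N ⌈/⌉ s) ∧ (N + 1) ⌈/⌉ s = N ⌈/⌉ s + 1 := by
  have hN : N ≤ s * (N ⌈/⌉ s) := (ceilDiv_le_iff_le_mul hs).1 le_rfl
  have hN1 : N + 1 ≤ s * ((N + 1) ⌈/⌉ s) := (ceilDiv_le_iff_le_mul hs).1 le_rfl
  have hmono : N ⌈/⌉ s ≤ (N + 1) ⌈/⌉ s := (ceilDiv_le_iff_le_mul hs).2 (by omega)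
  rcases hN.lt_or_eq with h | h
  · exact .inl (le_antisymm ((ceilDiv_le_iff_le_mul hs).2 h) hmono)
  · refine .inr ⟨h, le_antisymm ((ceilDiv_le_iff_le_mul hs).2 (by rw [mul_add]; omega)) ?_⟩
    by_contra! hlt
    have : s * ((N + 1) ⌈/⌉ s) ≤ s * (N ⌈/⌉ s) := Nat.mul_le_mul_left _ (by omega)
    omega

/-- `∑_{k<c} ∑_{sk<Y≤N} (dY + ak)²` in closed form, with `Tₚ = ∑_{k<c} kᵖ`. -/
def gapsAboveSqSum (a d s N c : ℚ) : ℚ :=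
  let T₁ := c * (c - 1) / 2
  let T₂ := c * (c - 1) * (2 * c - 1) / 6
  let T₃ := T₁ ^ 2
  d ^ 2 * (c * (N * (N + 1) * (2 * N + 1)) - (2 * s ^ 3 * T₃ + 3 * s ^ 2 * T₂ + s * T₁)) / 6
    + a * d * (N * (N + 1) * T₁ - s ^ 2 * T₃ - s * T₂) + a ^ 2 * (N * T₂ - s * T₃)

lemma sum_sq_gaps_above (a d : ℚ) {s : ℕ} (hs : 0 < s) (N : ℕ) :
    ∑ Y ∈ range (N + 1), ∑ k ∈ range (Y ⌈/⌉ s), (d * Y + a * k) ^ 2 =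
      gapsAboveSqSum a d s N ((N ⌈/⌉ s : ℕ) : ℚ) := by
  induction N with
  | zero => simp [gapsAboveSqSum]
  | succ N ih =>
    rw [sum_range_succ, ih, sum_range_sq_add_mul]
    rcases Nat.add_one_ceilDiv hs N with h | ⟨hN, h⟩ <;> rw [h]
    · simp only [gapsAboveSqSum]
      push_cast
      ring
    · generalize N ⌈/⌉ s = c at *
      subst hN
      simp only [gapsAboveSqSum]
      push_cast
      ring

lemma Nat.ceil_div_eq_ceilDiv {K : Type*} [Field K] [LinearOrder K] [IsStrictOrderedRing K]
    [FloorSemiring K] (m : ℕ) {n : ℕ} (hn : 0 < n) : ⌈(m : K) / n⌉₊ = m ⌈/⌉ n :=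
  eq_of_forall_ge_iff fun c => by
    rw [Nat.ceil_le, ceilDiv_le_iff_le_mul hn, div_le_iff₀ (by positivity), mul_comm]
    norm_cast

theorem sylvester_S2_arithmetic_progression_general
    (a d s : ℕ) (ha : 2 ≤ a) (hd : 1 ≤ d) (hs : 1 ≤ s)
    (had : Nat.Coprime a d)
    (NR : Finset ℕ)
    (hNR : ∀ n : ℕ, n ∈ NR ↔ 0 < n ∧
      ¬ ∃ x : Fin (s + 1) → ℕ, n = ∑ i : Fin (s + 1), (a + (i : ℕ) * d) * x i)
    (q : ℚ) (hq : q = (⌈((a : ℚ) - 1) / (s : ℚ)⌉ : ℚ)) :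
    12 * ∑ n ∈ NR, (n : ℚ) ^ 2 =
      -(s : ℚ) * (((a : ℚ) + (s : ℚ) * (d : ℚ)) * (2 * (a : ℚ) + (s : ℚ) * (d : ℚ))
          + (a : ℚ) ^ 2) * q ^ 4
      + (4 * (a : ℚ) ^ 3 + 2 * (3 * (s : ℚ) - 2) * (a : ℚ) ^ 2
          + 2 * (s : ℚ) * (d : ℚ) * (3 * (s : ℚ) - 2) * (a : ℚ)
          + 2 * (s : ℚ) ^ 2 * (d : ℚ) ^ 2 * ((s : ℚ) - 1)) * q ^ 3
      + (6 * ((d : ℚ) - 1) * (a : ℚ) ^ 3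
          + 3 * (2 - (s : ℚ) - 2 * (d : ℚ)) * (a : ℚ) ^ 2
          - 3 * (s : ℚ) * (d : ℚ) * ((s : ℚ) - 2) * (a : ℚ)
          - (s : ℚ) * (d : ℚ) ^ 2 * ((s : ℚ) ^ 2 - 3 * (s : ℚ) + 1)) * q ^ 2
      + (2 * (2 * (d : ℚ) - 1) * ((d : ℚ) - 1) * (a : ℚ) ^ 3
          - (6 * (d : ℚ) ^ 2 - 6 * (d : ℚ) + 2) * (a : ℚ) ^ 2
          + 2 * (d : ℚ) * ((d : ℚ) - (s : ℚ)) * (a : ℚ)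
          + (s : ℚ) * (1 - (s : ℚ)) * (d : ℚ) ^ 2) * q
      + (a : ℚ) * (d : ℚ) * ((a : ℚ) - 1) * ((d : ℚ) - 1)
          * ((a : ℚ) * (d : ℚ) - (a : ℚ) - (d : ℚ)) := by
  have ha' : 0 < a := by omega
  have hNR' : ∀ n, n ∈ NR ↔ n ∉ progressionSemigroup a d s := fun n => by
    rw [hNR]
    exact and_iff_right_of_imp fun h =>
      Nat.pos_of_ne_zero (by rintro rfl; exact h (zero_mem_progressionSemigroup a d s))
  have hq' : q = ((a - 1) ⌈/⌉ s : ℕ) := by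
    rw [hq, ← Nat.ceil_div_eq_ceilDiv (K := ℚ) _ hs, natCast_ceil_eq_intCast_ceil (by positivity),
      Nat.cast_sub (by omega), Nat.cast_one]
  have above := sum_sq_gaps_above a d hs (a - 1)
  rw [Nat.sub_add_cancel ha'] at above
  rw [sum_sq_not_mem_progressionSemigroup ha' hs had hNR', mul_add,
    twelve_mul_sum_sq_gaps_below ha' hd, above, hq', Nat.cast_sub ha']
  simp only [gapsAboveSqSum]
  push_cast
  ring

/-- For the arithmetic progression `a, a+d, …, a+sd` with `gcd(a,d)=1`,
`a ≥ 2`, `d ≥ 1`, `1 ≤ s < a`, and `q = ⌈(a−1)/s⌉`, the second Sylvester sum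
satisfies
`12·S₂ = −s((a+sd)(2a+sd)+a²)q⁴ + (4a³+2(3s−2)a²+2sd(3s−2)a+2s²d²(s−1))q³
  + (6(d−1)a³+3(2−s−2d)a²−3sd(s−2)a−sd²(s²−3s+1))q²
  + (2(2d−1)(d−1)a³−(6d²−6d+2)a²+2d(d−s)a+s(1−s)d²)q
  + ad(a−1)(d−1)(ad−a−d)`. -/
theorem sylvester_S2_arithmetic_progression
    (a d s : ℕ) (ha : 2 ≤ a) (hd : 1 ≤ d) (hs : 1 ≤ s) (hsa : s < a)
    (had : Nat.Coprime a d)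
    (NR : Finset ℕ)
    (hNR : ∀ n : ℕ, n ∈ NR ↔ 0 < n ∧
      ¬ ∃ x : Fin (s + 1) → ℕ, n = ∑ i : Fin (s + 1), (a + (i : ℕ) * d) * x i)
    (q : ℚ) (hq : q = (⌈((a : ℚ) - 1) / (s : ℚ)⌉ : ℚ)) :
    12 * ∑ n ∈ NR, (n : ℚ) ^ 2 =
      -(s : ℚ) * (((a : ℚ) + (s : ℚ) * (d : ℚ)) * (2 * (a : ℚ) + (s : ℚ) * (d : ℚ))
          + (a : ℚ) ^ 2) * q ^ 4
      + (4 * (a : ℚ) ^ 3 + 2 * (3 * (s : ℚ) - 2) * (a : ℚ) ^ 2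
          + 2 * (s : ℚ) * (d : ℚ) * (3 * (s : ℚ) - 2) * (a : ℚ)
          + 2 * (s : ℚ) ^ 2 * (d : ℚ) ^ 2 * ((s : ℚ) - 1)) * q ^ 3
      + (6 * ((d : ℚ) - 1) * (a : ℚ) ^ 3
          + 3 * (2 - (s : ℚ) - 2 * (d : ℚ)) * (a : ℚ) ^ 2
          - 3 * (s : ℚ) * (d : ℚ) * ((s : ℚ) - 2) * (a : ℚ)
          - (s : ℚ) * (d : ℚ) ^ 2 * ((s : ℚ) ^ 2 - 3 * (s : ℚ) + 1)) * q ^ 2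
      + (2 * (2 * (d : ℚ) - 1) * ((d : ℚ) - 1) * (a : ℚ) ^ 3
          - (6 * (d : ℚ) ^ 2 - 6 * (d : ℚ) + 2) * (a : ℚ) ^ 2
          + 2 * (d : ℚ) * ((d : ℚ) - (s : ℚ)) * (a : ℚ)
          + (s : ℚ) * (1 - (s : ℚ)) * (d : ℚ) ^ 2) * q
      + (a : ℚ) * (d : ℚ) * ((a : ℚ) - 1) * ((d : ℚ) - 1)
          * ((a : ℚ) * (d : ℚ) - (a : ℚ) - (d : ℚ)) :=
  sylvester_S2_arithmetic_progression_general a d s ha hd hs had NR hNR q hq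
end

section
/- For the generalized arithmetic progression a, ha+d, ha+2d, …, ha+sd with gcd(a,d) = 1, a ≥ 2, d, h ≥ 1 and 1 ≤ s < a, the set N (taken with respect to the element a) equals { h·a·⌈n/s⌉ + d·n : n = 1, …, a−1 }, where ⌈·⌉ is the ceiling function. -/
/-- Representability by the generalized arithmetic progression. -/
def GAPRep (a d h s n : ℕ) : Prop :=
  ∃ (x₀ : ℕ) (x : Fin s → ℕ),
    n = a * x₀ + ∑ i : Fin s, (h * a + ((i : ℕ) + 1) * d) * x i

lemma gap_sum_split (a d h s : ℕ) (x : Fin s → ℕ) :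
    ∑ i : Fin s, (h * a + ((i : ℕ) + 1) * d) * x i
      = h * a * (∑ i, x i) + d * (∑ i : Fin s, ((i : ℕ) + 1) * x i) := by
  rw [Finset.mul_sum, Finset.mul_sum, ← Finset.sum_add_distrib]
  exact Finset.sum_congr rfl fun i _ => by ring

lemma gap_comp_exists (s : ℕ) (hs : 1 ≤ s) :
    ∀ t m : ℕ, t ≤ m → m ≤ s * t →
      ∃ x : Fin s → ℕ, (∑ i, x i) = t ∧ (∑ i : Fin s, ((i : ℕ) + 1) * x i) = m := by
  intro t
  induction t with
  | zero =>
      intro m h1 h2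
      refine ⟨0, by simp, ?_⟩
      simp at h2 ⊢
      omega
  | succ t ih =>
      intro m h1 h2
      set p := min s (m - t) with hp
      have hp1 : 1 ≤ p := le_min hs (by omega)
      have hps : p ≤ s := min_le_left _ _
      have hpmt : p ≤ m - t := min_le_right _ _
      have hle : t ≤ m - p := by omega
      have h3 : m - p ≤ s * t := by
        rcases le_or_gt s (m - t) with hc | hc
        · have hpe : p = s := min_eq_left hc
          have h5 : s * (t + 1) = s * t + s := by ring
          omega
        · have hpe : p = m - t := min_eq_right (le_of_lt hc)
          have h5 : t ≤ s * t := Nat.le_mul_of_pos_left t (by omega)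
          omega
      obtain ⟨x', hx1, hx2⟩ := ih (m - p) hle h3
      have hplt : p - 1 < s := by omega
      set i₀ : Fin s := ⟨p - 1, hplt⟩ with hi₀
      refine ⟨fun i => x' i + (if i = i₀ then 1 else 0), ?_, ?_⟩
      · rw [Finset.sum_add_distrib, hx1, Finset.sum_ite_eq' Finset.univ i₀ (fun _ => 1)]
        simp
      · have key : ∑ i : Fin s, ((i : ℕ) + 1) * (x' i + (if i = i₀ then 1 else 0))
            = (∑ i : Fin s, ((i : ℕ) + 1) * x' i)
              + ∑ i : Fin s, (if i = i₀ then ((i : ℕ) + 1) else 0) := by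
          rw [← Finset.sum_add_distrib]
          exact Finset.sum_congr rfl fun i _ => by
            by_cases hii : i = i₀ <;> simp [hii] <;> ring
        rw [key, hx2, Finset.sum_ite_eq' Finset.univ i₀ (fun i => ((i : ℕ) + 1))]
        simp [hi₀]
        omega

lemma gap_rep_iff (a d h s n : ℕ) (hs : 1 ≤ s) :
    GAPRep a d h s n ↔
      ∃ x₀ t m : ℕ, t ≤ m ∧ m ≤ s * t ∧ n = a * x₀ + h * a * t + d * m := by
  constructor
  · rintro ⟨x₀, x, hx⟩
    refine ⟨x₀, ∑ i, x i, ∑ i : Fin s, ((i : ℕ) + 1) * x i, ?_, ?_, ?_⟩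
    · exact Finset.sum_le_sum fun i _ => Nat.le_mul_of_pos_left (x i) (by omega)
    · rw [Finset.mul_sum]
      exact Finset.sum_le_sum fun i _ =>
        Nat.mul_le_mul_right (x i) (by omega : (i : ℕ) + 1 ≤ s)
    · rw [hx, gap_sum_split, Nat.add_assoc]
  · rintro ⟨x₀, t, m, h1, h2, h3⟩
    obtain ⟨x, hxa, hxb⟩ := gap_comp_exists s hs t m h1 h2
    exact ⟨x₀, x, by rw [h3, gap_sum_split, hxa, hxb, Nat.add_assoc]⟩

lemma gap_ceil_le (s j t : ℕ) (hs : 1 ≤ s) (hj : j ≤ s * t) : (j + s - 1) / s ≤ t := by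
  by_contra hc
  push_neg at hc
  have h4 : s * (t + 1) ≤ s * ((j + s - 1) / s) := Nat.mul_le_mul_left s hc
  have h1 := Nat.div_add_mod (j + s - 1) s
  have h2 : (j + s - 1) % s < s := Nat.mod_lt _ (by omega)
  have h5 : s * (t + 1) = s * t + s := by ring
  omega

lemma gap_le_mul_ceil (s j : ℕ) (hs : 1 ≤ s) : j ≤ s * ((j + s - 1) / s) := by
  have h1 := Nat.div_add_mod (j + s - 1) s
  have h2 : (j + s - 1) % s < s := Nat.mod_lt _ (by omega)
  omega

lemma gap_ceil_pos (s j : ℕ) (hs : 1 ≤ s) (hj : 1 ≤ j) : 1 ≤ (j + s - 1) / s := by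
  have h := gap_le_mul_ceil s j hs
  rcases Nat.eq_zero_or_pos ((j + s - 1) / s) with h0 | h0
  · rw [h0] at h; omega
  · exact h0

lemma gap_ceil_q (s j : ℕ) (hs : 1 ≤ s) :
    ⌈(j : ℚ) / (s : ℚ)⌉ = (((j + s - 1) / s : ℕ) : ℤ) := by
  set c := (j + s - 1) / s with hc
  have h1 : j ≤ s * c := gap_le_mul_ceil s j hs
  have h2 : c * s ≤ j + s - 1 := Nat.div_mul_le_self _ _
  have h3 : s * c < j + s := by
    have : j + s - 1 < j + s := by omega
    calc s * c = c * s := Nat.mul_comm _ _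
      _ ≤ j + s - 1 := h2
      _ < j + s := this
  have hsq : (0 : ℚ) < (s : ℚ) := by exact_mod_cast (by omega : 0 < s)
  rw [Int.ceil_eq_iff]
  constructor
  · rw [lt_div_iff₀ hsq]
    have h3' : (s : ℚ) * c < j + s := by exact_mod_cast h3
    push_cast
    nlinarith
  · rw [div_le_iff₀ hsq]
    have h1' : (j : ℚ) ≤ s * c := by exact_mod_cast h1
    push_cast
    linarith

lemma gap_rep_f (a d h s j : ℕ) (hs : 1 ≤ s) (hj : 1 ≤ j) :
    GAPRep a d h s (h * a * ((j + s - 1) / s) + d * j) := by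
  rw [gap_rep_iff a d h s _ hs]
  refine ⟨0, (j + s - 1) / s, j, ?_, gap_le_mul_ceil s j hs, by ring⟩
  have := gap_ceil_le s j j hs (Nat.le_mul_of_pos_left j (by omega))
  exact this

lemma gap_rep_add_mul (a d h s n q : ℕ) (hrep : GAPRep a d h s n) :
    GAPRep a d h s (n + a * q) := by
  obtain ⟨x₀, x, hx⟩ := hrep
  exact ⟨x₀ + q, x, by rw [hx]; ring⟩

lemma gap_min_rep (a d h s : ℕ) (ha : 2 ≤ a) (hs : 1 ≤ s) (had : Nat.Coprime a d)
    (n j : ℕ) (hj1 : 1 ≤ j) (hj2 : j < a)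
    (hcong : (n : ZMod a) = (d : ZMod a) * (j : ZMod a))
    (hrep : GAPRep a d h s n) :
    ∃ q, n = (h * a * ((j + s - 1) / s) + d * j) + a * q := by
  haveI : NeZero a := ⟨by omega⟩
  obtain ⟨x₀, t, m, h1, h2, h3⟩ := (gap_rep_iff a d h s n hs).mp hrep
  have hnm : (n : ZMod a) = (d : ZMod a) * (m : ZMod a) := by
    rw [h3]
    push_cast
    rw [ZMod.natCast_self]
    ring
  have hu : IsUnit (d : ZMod a) := (ZMod.isUnit_iff_coprime d a).mpr had.symm
  have hm : (m : ZMod a) = (j : ZMod a) := by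
    apply hu.mul_left_cancel
    rw [← hnm, hcong]
  have hmod : m % a = j := by
    have := (ZMod.natCast_eq_natCast_iff' m j a).mp hm
    rwa [Nat.mod_eq_of_lt hj2] at this
  set k := m / a with hk
  have h4 : a * k + m % a = m := Nat.div_add_mod m a
  have hm2 : m = a * k + j := by rw [← hmod]; exact h4.symm
  set c := (j + s - 1) / s with hc
  have hjm : j ≤ m := by omega
  have hct : c ≤ t := gap_ceil_le s j t hs (le_trans hjm h2)
  refine ⟨x₀ + h * (t - c) + d * k, ?_⟩
  have hts : t = c + (t - c) := by omega
  calc n = a * x₀ + h * a * (c + (t - c)) + d * (a * k + j) := by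
        rw [← hts, ← hm2]; exact h3
    _ = (h * a * c + d * j) + a * (x₀ + h * (t - c) + d * k) := by ring

lemma gap_rep_mod_zero (a d h s n : ℕ) (ha : 2 ≤ a) (hs : 1 ≤ s)
    (had : Nat.Coprime a d)
    (hcong : (n : ZMod a) = 0) (hrep : GAPRep a d h s n) :
    ∃ K, n = a * K := by
  haveI : NeZero a := ⟨by omega⟩
  obtain ⟨x₀, t, m, h1, h2, h3⟩ := (gap_rep_iff a d h s n hs).mp hrep
  have hnm : (n : ZMod a) = (d : ZMod a) * (m : ZMod a) := by
    rw [h3]; push_cast; rw [ZMod.natCast_self]; ring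
  have hu : IsUnit (d : ZMod a) := (ZMod.isUnit_iff_coprime d a).mpr had.symm
  have hm : (m : ZMod a) = 0 := by
    apply hu.mul_left_cancel
    rw [← hnm, hcong, mul_zero]
  obtain ⟨k, hk⟩ := (ZMod.natCast_eq_zero_iff m a).mp hm
  exact ⟨x₀ + h * t + d * k, by rw [h3, hk]; ring⟩

lemma gap_rep_int (a d h s n : ℕ) (hn : a ≤ n) (hrep : GAPRep a d h s (n - a)) :
    ∃ (x₀ : ℕ) (x : Fin s → ℕ),
      (n : ℤ) - (a : ℤ) = (a : ℤ) * (x₀ : ℤ)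
        + ∑ i : Fin s, ((h : ℤ) * (a : ℤ) + (((i : ℕ) : ℤ) + 1) * (d : ℤ)) * (x i : ℤ) := by
  obtain ⟨x₀, x, hx⟩ := hrep
  refine ⟨x₀, x, ?_⟩
  have h1 : (n : ℤ) - (a : ℤ) = ((n - a : ℕ) : ℤ) := by
    rw [Nat.cast_sub hn]
  rw [h1, hx]
  push_cast
  ring

lemma gap_rep_int_rev (a d h s n : ℕ)
    (hex : ∃ (x₀ : ℕ) (x : Fin s → ℕ),
      (n : ℤ) - (a : ℤ) = (a : ℤ) * (x₀ : ℤ)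
        + ∑ i : Fin s, ((h : ℤ) * (a : ℤ) + (((i : ℕ) : ℤ) + 1) * (d : ℤ)) * (x i : ℤ)) :
    a ≤ n ∧ GAPRep a d h s (n - a) := by
  obtain ⟨x₀, x, hx⟩ := hex
  have hcast : (n : ℤ) - (a : ℤ)
      = ((a * x₀ + ∑ i : Fin s, (h * a + ((i : ℕ) + 1) * d) * x i : ℕ) : ℤ) := by
    rw [hx]; push_cast; ring
  have hge : (0 : ℤ) ≤ (n : ℤ) - (a : ℤ) := by
    rw [hcast]; exact Int.natCast_nonneg _
  have hna : a ≤ n := by exact_mod_cast sub_nonneg.mp hge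
  refine ⟨hna, x₀, x, ?_⟩
  have : ((n - a : ℕ) : ℤ)
      = ((a * x₀ + ∑ i : Fin s, (h * a + ((i : ℕ) + 1) * d) * x i : ℕ) : ℤ) := by
    rw [Nat.cast_sub hna]; exact hcast
  exact_mod_cast this

/-- For the generalized arithmetic progression `a, ha+d, ha+2d, …, ha+sd` with
`gcd(a,d) = 1`, `a ≥ 2`, `d, h ≥ 1`, `1 ≤ s < a` (Matthews), the set `N`
(with respect to `a`) equals `{ h·a·⌈n/s⌉ + d·n : n = 1, …, a−1 }`. -/
theorem N_generalized_arithmetic_progression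
    (a d h s : ℕ) (ha : 2 ≤ a) (hd : 1 ≤ d) (hh : 1 ≤ h) (hs : 1 ≤ s)
    (hsa : s < a) (had : Nat.Coprime a d)
    (NR N : Finset ℕ)
    (hNR : ∀ n : ℕ, n ∈ NR ↔ 0 < n ∧
      ¬ ∃ (x₀ : ℕ) (x : Fin s → ℕ),
        n = a * x₀ + ∑ i : Fin s, (h * a + ((i : ℕ) + 1) * d) * x i)
    (hN : ∀ n : ℕ, n ∈ N ↔ 0 < n ∧
      (∃ (x₀ : ℕ) (x : Fin s → ℕ),
        n = a * x₀ + ∑ i : Fin s, (h * a + ((i : ℕ) + 1) * d) * x i) ∧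
      ¬ ∃ (x₀ : ℕ) (x : Fin s → ℕ),
        (n : ℤ) - (a : ℤ) = (a : ℤ) * (x₀ : ℤ)
          + ∑ i : Fin s, ((h : ℤ) * (a : ℤ) + (((i : ℕ) : ℤ) + 1) * (d : ℤ)) * (x i : ℤ)) :
    ∀ n : ℕ, n ∈ N ↔ ∃ j : ℕ, 1 ≤ j ∧ j ≤ a - 1 ∧
      (n : ℤ) = (h : ℤ) * (a : ℤ) * ⌈(j : ℚ) / (s : ℚ)⌉ + (d : ℤ) * (j : ℤ) := by
  intro n
  haveI : NeZero a := ⟨by omega⟩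
  rw [hN]
  constructor
  · rintro ⟨hpos, hrep, hnot⟩
    have hrep' : GAPRep a d h s n := hrep
    -- n is not divisible by a
    have hndvd : (n : ZMod a) ≠ 0 := by
      intro h0
      obtain ⟨K, hK⟩ := gap_rep_mod_zero a d h s n ha hs had h0 hrep'
      obtain ⟨K', rfl⟩ : ∃ K', K = K' + 1 := by
        refine ⟨K - 1, ?_⟩
        rcases Nat.eq_zero_or_pos K with h0' | h0'
        · rw [h0'] at hK; omega
        · omega
      apply hnot
      apply gap_rep_int a d h s n
      · rw [hK]
        exact Nat.le_mul_of_pos_right a (by omega)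
      · have hsub : n - a = a * K' := by
          rw [hK, Nat.mul_add, Nat.mul_one, Nat.add_sub_cancel]
        rw [hsub]
        exact ⟨K', 0, by simp⟩
    -- find j with d * j ≡ n (mod a)
    obtain ⟨v, hv⟩ := ((ZMod.isUnit_iff_coprime d a).mpr had.symm).exists_right_inv
    set u : ZMod a := (n : ZMod a) with hu
    set j := (v * u).val with hj
    have hj0 : ((j : ℕ) : ZMod a) = v * u := ZMod.natCast_rightInverse (v * u)
    have hj2 : j < a := ZMod.val_lt (v * u)
    have hj1 : 1 ≤ j := by
      rcases Nat.eq_zero_or_pos j with h0 | h0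
      · exfalso
        have hvu : v * u = 0 := by rw [← hj0, h0]; simp
        have : u = 0 := by
          calc u = 1 * u := (one_mul u).symm
            _ = ((d : ZMod a) * v) * u := by rw [hv]
            _ = (d : ZMod a) * (v * u) := by ring
            _ = 0 := by rw [hvu, mul_zero]
        exact hndvd this
      · exact h0
    have hcong : (n : ZMod a) = (d : ZMod a) * (j : ZMod a) := by
      rw [hj0, ← mul_assoc, hv, one_mul]
    obtain ⟨q, hq⟩ := gap_min_rep a d h s ha hs had n j hj1 hj2 hcong hrep'
    rcases Nat.eq_zero_or_pos q with hq0 | hq1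
    · refine ⟨j, hj1, by omega, ?_⟩
      rw [gap_ceil_q s j hs]
      set c := (j + s - 1) / s with hc
      clear_value c
      rw [hq0, Nat.mul_zero, Nat.add_zero] at hq
      exact_mod_cast hq
    · exfalso
      apply hnot
      set c := (j + s - 1) / s with hc
      obtain ⟨q', rfl⟩ : ∃ q', q = q' + 1 := ⟨q - 1, by omega⟩
      have hna : n = ((h * a * c + d * j) + a * q') + a := by rw [hq]; ring
      apply gap_rep_int a d h s n
      · rw [hna]
        exact Nat.le_add_left a _
      · have hsub : n - a = (h * a * c + d * j) + a * q' := by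
          rw [hna, Nat.add_sub_cancel]
        rw [hsub]
        exact gap_rep_add_mul a d h s _ q' (gap_rep_f a d h s j hs hj1)
  · rintro ⟨j, hj1, hj2, hjn⟩
    have hj2' : j < a := by omega
    rw [gap_ceil_q s j hs] at hjn
    set c := (j + s - 1) / s with hc
    have hn : n = h * a * c + d * j := by exact_mod_cast hjn
    have hdj : 0 < d * j := Nat.mul_pos (by omega) (by omega)
    refine ⟨by omega, ?_, ?_⟩
    · have := gap_rep_f a d h s j hs hj1
      rw [← hn] at this
      exact this
    · intro hex
      obtain ⟨hna, hrepsub⟩ := gap_rep_int_rev a d h s n hex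
      have hcong2 : ((n - a : ℕ) : ZMod a) = (d : ZMod a) * (j : ZMod a) := by
        rw [Nat.cast_sub hna, hn]
        push_cast
        rw [ZMod.natCast_self]
        ring
      obtain ⟨q, hq⟩ := gap_min_rep a d h s ha hs had (n - a) j hj1 hj2' hcong2 hrepsub
      -- n - a = n + a*q, contradiction
      rw [← hn] at hq
      have h5 : n - a + a = n := by omega
      have h6 : 0 ≤ a * q := Nat.zero_le _
      omega
end

section
/- For the generalized arithmetic progression a, ha+d, ha+2d, …, ha+sd with gcd(a,d) = 1, a ≥ 2, d, h ≥ 1 and 1 ≤ s < a, and every integer m ≥ 1, the Sylvester sum satisfies m·S_{m−1} = a^{m−1}·∑_{n=0}^{a−1} B_m(h·⌈n/s⌉ + nd/a) − B_m, where B_m(x) is the m-th Bernoulli polynomial, B_m = B_m(0), and ⌈·⌉ is the ceiling function. -/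
/-!
For `q < a` the residues `q * d mod a` are pairwise distinct, and the least element of the
semigroup in the class of `q * d` is `w q = h a ⌈q / s⌉ + q d`: reaching that class forces
`∑ (i + 1) x_i ≥ q`, which takes at least `⌈q / s⌉` generators of the form `ha + id`.
Hence the gaps in that class are `w q mod a + a j` for `j < w q / a`, and summing `m n^(m-1)`
over them telescopes to `a^(m-1) (B_m(w q / a) - B_m((w q mod a) / a))`. As `q` runs over
`0, …, a - 1` the residues `w q mod a` run over all of `0, …, a - 1`, and Raabe's multiplication
theorem `a^(m-1) ∑_{k<a} B_m(k / a) = B_m` turns the subtracted terms into `B_m`.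
-/

open Finset

namespace Polynomial

theorem eq_C_eval_zero_of_eval_add_one_eq {R : Type*} [CommRing R] [IsDomain R] [CharZero R]
    {p : R[X]} (hp : ∀ x, p.eval (x + 1) = p.eval x) : p = C (p.eval 0) := by
  have hnat : ∀ n : ℕ, p.eval (n : R) = p.eval 0 := by
    intro n
    induction n with
    | zero => simp
    | succ n ih => rw [Nat.cast_succ, hp, ih]
  refine eq_of_infinite_eval_eq _ _ ((Set.infinite_range_of_injective Nat.cast_injective).mono ?_)
  rintro _ ⟨n, rfl⟩
  simp [hnat n]

noncomputable def raabeDefect (a m : ℕ) : ℚ[X] :=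
  C ((a : ℚ) ^ m) * ∑ k ∈ range a, (bernoulli (m + 1)).comp (C (a : ℚ)⁻¹ * (X + C (k : ℚ)))
    - bernoulli (m + 1)

theorem eval_raabeDefect (a m : ℕ) (x : ℚ) :
    (raabeDefect a m).eval x =
      (a : ℚ) ^ m * ∑ k ∈ range a, (bernoulli (m + 1)).eval ((x + k) / a)
        - (bernoulli (m + 1)).eval x := by
  simp [raabeDefect, eval_finsetSum, div_eq_inv_mul]

theorem eval_add_one_raabeDefect {a : ℕ} (ha : 0 < a) (m : ℕ) (x : ℚ) :
    (raabeDefect a m).eval (x + 1) = (raabeDefect a m).eval x := by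
  set F : ℕ → ℚ := fun k => (bernoulli (m + 1)).eval ((x + k) / a)
  have hF : F a = F 0 + (m + 1) * (x / a) ^ m := by
    have : (x + a) / a = 1 + x / a := by field_simp; ring
    simp only [F, this, bernoulli_eval_one_add, CharP.cast_eq_zero, add_zero]
    push_cast
    ring
  have hshift : ∑ k ∈ range a, (bernoulli (m + 1)).eval ((x + 1 + k) / a) =
      ∑ k ∈ range a, F k + (m + 1) * (x / a) ^ m := by
    have h := sum_range_succ' F a
    rw [sum_range_succ, hF] at h
    simp only [F, Nat.cast_succ, add_assoc, add_comm (1 : ℚ)] at h ⊢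
    linarith
  rw [eval_raabeDefect, eval_raabeDefect, hshift, add_comm x 1, bernoulli_eval_one_add, div_pow]
  field_simp
  push_cast
  ring

theorem derivative_raabeDefect_succ {a : ℕ} (ha : 0 < a) (m : ℕ) :
    derivative (raabeDefect a (m + 1)) = C ((m : ℚ) + 2) * raabeDefect a m := by
  apply Polynomial.funext
  intro x
  simp only [raabeDefect, derivative_sub, derivative_sum, derivative_comp,
    derivative_bernoulli_add_one, derivative_mul, derivative_X, derivative_C, derivative_add,
    eval_sub, eval_mul, eval_C, eval_finsetSum, eval_add, eval_X, eval_comp, eval_natCast,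
    eval_one, eval_zero]
  simp only [zero_mul, zero_add, add_zero, mul_one, ← mul_sum, pow_succ]
  field_simp
  push_cast
  ring

/- `raabeDefect a (m + 1)` is 1-periodic, hence constant, and its derivative is
`(m + 2) * raabeDefect a m`. -/
theorem raabeDefect_eq_zero {a : ℕ} (ha : 0 < a) (m : ℕ) : raabeDefect a m = 0 := by
  have hconst := eq_C_eval_zero_of_eval_add_one_eq (eval_add_one_raabeDefect ha (m + 1))
  have h := derivative_raabeDefect_succ ha m
  rw [hconst, derivative_C, eq_comm, mul_eq_zero] at h
  exact h.resolve_left (C_ne_zero.mpr (by positivity))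

theorem pow_mul_sum_bernoulli_eval_add_div {a : ℕ} (ha : 0 < a) (m : ℕ) (x : ℚ) :
    (a : ℚ) ^ m * ∑ k ∈ range a, (bernoulli (m + 1)).eval ((x + k) / a) =
      (bernoulli (m + 1)).eval x := by
  rw [← sub_eq_zero, ← eval_raabeDefect, raabeDefect_eq_zero ha, eval_zero]

theorem sum_range_add_mul_pow_eq_bernoulli_sub {a : ℚ} (ha : a ≠ 0) (m J : ℕ) (x : ℚ) :
    (m + 1) * ∑ j ∈ range J, (x + a * j) ^ m =
      a ^ m * ((bernoulli (m + 1)).eval (x / a + J) - (bernoulli (m + 1)).eval (x / a)) := by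
  have hstep : ∀ j : ℕ, (m + 1) * (x + a * j) ^ m =
      a ^ m * ((bernoulli (m + 1)).eval (x / a + (j + 1 : ℕ)) -
        (bernoulli (m + 1)).eval (x / a + j)) := by
    intro j
    rw [Nat.cast_succ, ← add_assoc, add_comm (x / a + j) 1, bernoulli_eval_one_add,
      add_sub_cancel_left, Nat.add_sub_cancel]
    have : x / a + j = (x + a * j) / a := by field_simp
    rw [this, div_pow]
    field_simp
    push_cast
    ring
  rw [mul_sum, sum_congr rfl fun j _ => hstep j, ← mul_sum,
    sum_range_sub (fun j : ℕ => (bernoulli (m + 1)).eval (x / a + j)), Nat.cast_zero, add_zero]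

end Polynomial

theorem Nat.modEq_and_lt_iff_exists_add_mul {a w n : ℕ} (ha : 0 < a) :
    (w ≡ n [MOD a] ∧ n < w) ↔ ∃ j < w / a, w % a + a * j = n := by
  have hn := Nat.mod_add_div n a
  have hw := Nat.mod_add_div w a
  constructor
  · rintro ⟨hmod, hlt⟩
    refine ⟨n / a, ?_, by rw [hmod, hn]⟩
    rw [← hw, ← hn, hmod] at hlt
    exact Nat.lt_of_mul_lt_mul_left (Nat.lt_of_add_lt_add_left hlt)
  · rintro ⟨j, hj, rfl⟩
    refine ⟨by simp [Nat.ModEq, Nat.add_mul_mod_self_left], ?_⟩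
    calc w % a + a * j < w % a + a * (w / a) := by gcongr
      _ = w := hw

theorem sylvester_sum_eq_of_apery {a : ℕ} (ha : 0 < a) {w : ℕ → ℕ}
    (hw : Set.BijOn (fun q => w q % a) (range a : Set ℕ) (range a : Set ℕ)) {NR : Finset ℕ}
    (hNR : ∀ n, n ∈ NR ↔ ∃ q < a, w q ≡ n [MOD a] ∧ n < w q) (m : ℕ) :
    (m + 1) * ∑ n ∈ NR, (n : ℚ) ^ m =
      (a : ℚ) ^ m * ∑ q ∈ range a, (Polynomial.bernoulli (m + 1)).eval ((w q : ℚ) / a) -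
        bernoulli (m + 1) := by
  have ha' : (a : ℚ) ≠ 0 := by positivity
  set part : ℕ → Finset ℕ := fun q => (range (w q / a)).image fun j => w q % a + a * j
  have hNR_eq : NR = (range a).biUnion part := by
    ext n
    simp only [hNR, part, mem_biUnion, mem_range, mem_image,
      Nat.modEq_and_lt_iff_exists_add_mul ha]
  have hdisj : (range a : Set ℕ).PairwiseDisjoint part := by
    intro q hq q' hq' hne
    refine disjoint_left.mpr fun n hn hn' => hne (hw.injOn hq hq' ?_)
    simp only [part, mem_image, mem_range] at hn hn'
    obtain ⟨j, -, rfl⟩ := hn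
    obtain ⟨j', -, hj'⟩ := hn'
    simpa [Nat.add_mul_mod_self_left] using (congrArg (· % a) hj').symm
  have hpart : ∀ q, (m + 1) * ∑ n ∈ part q, (n : ℚ) ^ m =
      (a : ℚ) ^ m * ((Polynomial.bernoulli (m + 1)).eval ((w q : ℚ) / a) -
        (Polynomial.bernoulli (m + 1)).eval (((w q % a : ℕ) : ℚ) / a)) := by
    intro q
    rw [sum_image fun j _ j' _ h => Nat.eq_of_mul_eq_mul_left ha (Nat.add_left_cancel h)]
    push_cast
    rw [Polynomial.sum_range_add_mul_pow_eq_bernoulli_sub ha']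
    congr 3
    rw [div_add' _ _ _ ha', ← Nat.cast_mul, mul_comm, ← Nat.cast_add, Nat.mod_add_div]
  have hperm : ∑ q ∈ range a, (Polynomial.bernoulli (m + 1)).eval (((w q % a : ℕ) : ℚ) / a) =
      ∑ k ∈ range a, (Polynomial.bernoulli (m + 1)).eval ((0 + k : ℚ) / a) :=
    sum_nbij (fun q => w q % a) (fun q hq => hw.mapsTo hq) hw.injOn hw.surjOn (by simp)
  rw [hNR_eq, sum_biUnion hdisj, mul_sum, sum_congr rfl fun q _ => hpart q, ← mul_sum,
    sum_sub_distrib, mul_sub, hperm, Polynomial.pow_mul_sum_bernoulli_eval_add_div ha,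
    Polynomial.bernoulli_eval_zero]

theorem Nat.cast_ceilDiv_eq_ceil (q s : ℕ) : ((q ⌈/⌉ s : ℕ) : ℚ) = (⌈(q : ℚ) / s⌉ : ℚ) := by
  rcases s.eq_zero_or_pos with rfl | hs
  · simp
  have hnat : ⌈(q : ℚ) / s⌉₊ = q ⌈/⌉ s := eq_of_forall_ge_iff fun n => by
    rw [Nat.ceil_le, ceilDiv_le_iff_le_mul hs, div_le_iff₀ (by positivity), ← Nat.cast_mul,
      Nat.cast_le, mul_comm]
  rw [← hnat, ← Int.natCast_ceil_eq_ceil (by positivity), Int.cast_natCast]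

theorem exists_sum_eq_of_le_of_le_mul {s u q : ℕ} (hu : u ≤ q) (hq : q ≤ s * u) :
    ∃ x : Fin s → ℕ, ∑ i, x i = u ∧ ∑ i : Fin s, ((i : ℕ) + 1) * x i = q := by
  induction u generalizing q with
  | zero => exact ⟨0, by simp, by simp_all⟩
  | succ u ih =>
    rw [Nat.mul_succ] at hq
    have hs : 0 < s := by rcases s with _ | s <;> simp_all
    obtain ⟨p, hp⟩ : ∃ p, p = min s (q - u) := ⟨_, rfl⟩
    have hsu : u ≤ s * u := Nat.le_mul_of_pos_left u hs
    obtain ⟨x, hxu, hxq⟩ := ih (q := q - p) (by omega) (by omega)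
    refine ⟨x + Pi.single ⟨p - 1, by omega⟩ 1, ?_, ?_⟩
    · simp [sum_add_distrib, hxu]
    · simp [mul_add, sum_add_distrib, hxq, Pi.single_apply]
      omega

theorem sum_succ_mul_le_mul_sum {s : ℕ} (x : Fin s → ℕ) :
    ∑ i : Fin s, ((i : ℕ) + 1) * x i ≤ s * ∑ i, x i := by
  rw [mul_sum]
  exact sum_le_sum fun i _ => Nat.mul_le_mul_right _ i.isLt

namespace GenArithProgSemigroup

def Mem (a d h s n : ℕ) : Prop :=
  ∃ (x₀ : ℕ) (x : Fin s → ℕ), n = a * x₀ + ∑ i : Fin s, (h * a + ((i : ℕ) + 1) * d) * x i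

/-- The least element of `Mem a d h s` congruent to `q * d` modulo `a`. -/
def apery (a d h s q : ℕ) : ℕ := h * a * (q ⌈/⌉ s) + q * d

variable {a d h s : ℕ}

theorem mem_zero : Mem a d h s 0 := ⟨0, 0, by simp⟩

theorem apery_modEq (q : ℕ) : apery a d h s q ≡ q * d [MOD a] := by
  simp [apery, Nat.ModEq, mul_right_comm h a, Nat.mul_add_mod_self_right]

theorem mem_iff_apery_le (had : a.Coprime d) (hs : 0 < s) {q n : ℕ} (hq : q < a)
    (hn : q * d ≡ n [MOD a]) : Mem a d h s n ↔ apery a d h s q ≤ n := by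
  have hexpand : ∀ x : Fin s → ℕ, ∑ i : Fin s, (h * a + ((i : ℕ) + 1) * d) * x i =
      h * a * ∑ i, x i + (∑ i : Fin s, ((i : ℕ) + 1) * x i) * d := by
    intro x
    simp only [mul_sum, sum_mul, ← sum_add_distrib]
    exact sum_congr rfl fun i _ => by ring
  constructor
  · rintro ⟨x₀, x, rfl⟩
    rw [hexpand] at hn ⊢
    set t := ∑ i : Fin s, ((i : ℕ) + 1) * x i
    have htq : t ≡ q [MOD a] := by
      refine Nat.ModEq.cancel_right_of_coprime had (Nat.ModEq.trans ?_ hn.symm)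
      have : a * x₀ + (h * a * ∑ i, x i + t * d) = t * d + a * (x₀ + h * ∑ i, x i) := by ring
      rw [this]
      exact (Nat.add_mul_mod_self_left _ _ _).symm
    have hqt : q ≤ t := by
      have := htq.symm
      rw [Nat.ModEq, Nat.mod_eq_of_lt hq] at this
      exact this ▸ Nat.mod_le t a
    have hceil : q ⌈/⌉ s ≤ ∑ i, x i :=
      (ceilDiv_le_iff_le_mul hs).mpr (hqt.trans (sum_succ_mul_le_mul_sum x))
    calc apery a d h s q ≤ h * a * ∑ i, x i + t * d := by unfold apery; gcongr
      _ ≤ a * x₀ + (h * a * ∑ i, x i + t * d) := Nat.le_add_left _ _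
  · intro hle
    obtain ⟨x, hxu, hxq⟩ := exists_sum_eq_of_le_of_le_mul (s := s) (u := q ⌈/⌉ s) (q := q)
      ((ceilDiv_le_iff_le_mul hs).mpr (Nat.le_mul_of_pos_left q hs))
      ((ceilDiv_le_iff_le_mul hs).mp le_rfl)
    obtain ⟨x₀, hx₀⟩ := (Nat.modEq_iff_dvd' hle).mp ((apery_modEq q).trans hn)
    refine ⟨x₀, x, ?_⟩
    rw [hexpand, hxu, hxq, ← hx₀]
    unfold apery at hle ⊢
    omega

theorem bijOn_apery_mod (had : a.Coprime d) :
    Set.BijOn (fun q => apery a d h s q % a) (range a : Set ℕ) (range a : Set ℕ) := by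
  have hmaps :
      Set.MapsTo (fun q => apery a d h s q % a) (range a : Set ℕ) (range a : Set ℕ) :=
    fun q hq => by simpa using Nat.mod_lt _ (Nat.zero_lt_of_lt (by simpa using hq))
  refine ((finite_toSet _).injOn_iff_bijOn_of_mapsTo hmaps).mp fun q hq q' hq' hqq' => ?_
  have hmod : q ≡ q' [MOD a] := Nat.ModEq.cancel_right_of_coprime had
    ((apery_modEq q).symm.trans (hqq'.trans (apery_modEq q')))
  simpa [Nat.ModEq, Nat.mod_eq_of_lt (mem_range.mp hq), Nat.mod_eq_of_lt (mem_range.mp hq')]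
    using hmod

theorem not_mem_iff_exists_apery (ha : 0 < a) (had : a.Coprime d) (hs : 0 < s) (n : ℕ) :
    ¬ Mem a d h s n ↔ ∃ q < a, apery a d h s q ≡ n [MOD a] ∧ n < apery a d h s q := by
  constructor
  · intro hn
    obtain ⟨q, hq, hqn⟩ := (bijOn_apery_mod (h := h) (s := s) had).surjOn
      (by simpa using Nat.mod_lt n ha : n % a ∈ (range a : Set ℕ))
    replace hq : q < a := by simpa using hq
    replace hqn : apery a d h s q ≡ n [MOD a] := by simpa [Nat.ModEq] using hqn
    refine ⟨q, hq, hqn, not_le.mp fun hle => hn ?_⟩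
    exact (mem_iff_apery_le had hs hq ((apery_modEq q).symm.trans hqn)).mpr hle
  · rintro ⟨q, hq, hqn, hlt⟩ hn
    exact (mem_iff_apery_le had hs hq ((apery_modEq q).symm.trans hqn)).mp hn |>.not_gt hlt

end GenArithProgSemigroup

open GenArithProgSemigroup

theorem sylvester_sum_generalized_arithmetic_progression_general
    (a d h s : ℕ) (ha : 2 ≤ a) (hs : 1 ≤ s)
    (had : Nat.Coprime a d)
    (NR : Finset ℕ)
    (hNR : ∀ n : ℕ, n ∈ NR ↔ 0 < n ∧
      ¬ ∃ (x₀ : ℕ) (x : Fin s → ℕ),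
        n = a * x₀ + ∑ i : Fin s, (h * a + ((i : ℕ) + 1) * d) * x i)
    (m : ℕ) (hm : 1 ≤ m) :
    (m : ℚ) * ∑ n ∈ NR, (n : ℚ) ^ (m - 1) =
      (a : ℚ) ^ (m - 1) *
        ∑ n ∈ Finset.range a,
          (Polynomial.bernoulli m).eval
            ((h : ℚ) * (⌈(n : ℚ) / (s : ℚ)⌉ : ℚ) + (n : ℚ) * (d : ℚ) / (a : ℚ))
      - bernoulli m := by
  obtain ⟨m, rfl⟩ := Nat.exists_eq_add_of_le' hm
  have hNR' (n : ℕ) :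
      n ∈ NR ↔ ∃ q < a, apery a d h s q ≡ n [MOD a] ∧ n < apery a d h s q := by
    rw [hNR, ← not_mem_iff_exists_apery (by omega) had hs]
    exact and_iff_right_of_imp fun hn => Nat.pos_of_ne_zero (by rintro rfl; exact hn mem_zero)
  rw [Nat.add_sub_cancel, Nat.cast_succ,
    sylvester_sum_eq_of_apery (by omega) (bijOn_apery_mod had) hNR' m]
  congr 3 with q
  rw [apery]
  push_cast [Nat.cast_ceilDiv_eq_ceil]
  field_simp

/-- Equation (6.1.x.7): for the generalized arithmetic progression
`a, ha+d, ha+2d, …, ha+sd` with `gcd(a,d) = 1`, `a ≥ 2`, `d, h ≥ 1`,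
`1 ≤ s < a`, and `m ≥ 1`,
`m·S_{m−1} = a^{m−1}·∑_{n=0}^{a−1} B_m(h⌈n/s⌉ + nd/a) − B_m`. -/
theorem sylvester_sum_generalized_arithmetic_progression
    (a d h s : ℕ) (ha : 2 ≤ a) (hd : 1 ≤ d) (hh : 1 ≤ h) (hs : 1 ≤ s)
    (hsa : s < a) (had : Nat.Coprime a d)
    (NR : Finset ℕ)
    (hNR : ∀ n : ℕ, n ∈ NR ↔ 0 < n ∧
      ¬ ∃ (x₀ : ℕ) (x : Fin s → ℕ),
        n = a * x₀ + ∑ i : Fin s, (h * a + ((i : ℕ) + 1) * d) * x i)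
    (m : ℕ) (hm : 1 ≤ m) :
    (m : ℚ) * ∑ n ∈ NR, (n : ℚ) ^ (m - 1) =
      (a : ℚ) ^ (m - 1) *
        ∑ n ∈ Finset.range a,
          (Polynomial.bernoulli m).eval
            ((h : ℚ) * (⌈(n : ℚ) / (s : ℚ)⌉ : ℚ) + (n : ℚ) * (d : ℚ) / (a : ℚ))
      - bernoulli m :=
  sylvester_sum_generalized_arithmetic_progression_general a d h s ha hs had NR hNR m hm
end
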